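/- arXiv:1107.1947 — 4 statements merged into one kernel-verified Lean document; each statement's English description precedes it below -/
import Mathlib

section
/- For all u, v ∈ ℝ⁷ ≅ Im ℍ × ℍ, the octonionic cross product satisfies ‖u × v‖² = ‖u‖² ‖v‖² − ⟨u, v⟩²; that is, the length of u × v equals the area of the parallelogram spanned by u and v (property (ii) of a 2-fold vector cross product). -/
noncomputable section

/-- The Euclidean inner product on `ℝ⁷ ≅ Im ℍ × ℍ`:
`⟨(a,b),(c,d)⟩ = Re(a c*) + Re(b d*)`. -/
def oinner (x y : Quaternion ℝ × Quaternion ℝ) : ℝ :=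
  (x.1 * star y.1).re + (x.2 * star y.2).re

/-- The induced Euclidean norm. -/
def onorm (x : Quaternion ℝ × Quaternion ℝ) : ℝ :=
  Real.sqrt (oinner x x)

/-- The octonionic cross product on `ℝ⁷ ≅ Im ℍ × ℍ` (Cayley–Dickson):
`(a,b) × (c,d) = (Im(a c − d* b), d a + b c*)`. -/
def ocross (x y : Quaternion ℝ × Quaternion ℝ) : Quaternion ℝ × Quaternion ℝ :=
  ((x.1 * y.1 - star y.2 * x.2).im, y.2 * x.1 + x.2 * star y.1)

/-! Writing `x ∘ y` for the Cayley–Dickson product on `ℍ × ℍ`, the cross product is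
`x × y = Im (x ∘ y)` and, because the real part of `x ∘ y` lies in the first factor and `x.1` is
imaginary, `Re (x ∘ y) = -⟨x, y⟩`. Hence
`‖x × y‖² = ‖x ∘ y‖² - ⟨x, y⟩² = ‖x‖² ‖y‖² - ⟨x, y⟩²`
by multiplicativity of the octonion norm, which itself reduces to the quaternion identities
`N(ab) = N(a) N(b)` and `Re(ab) = Re(ba)`. -/

namespace Quaternion

variable {R : Type*} [CommRing R]

theorem re_mul_comm (a b : ℍ[R]) : (a * b).re = (b * a).re := by
  simp only [re_mul]
  ring

theorem normSq_sub (a b : ℍ[R]) : normSq (a - b) = normSq a + normSq b - 2 * (a * star b).re := by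
  rw [sub_eq_add_neg, normSq_add, normSq_neg, star_neg, mul_neg, re_neg]
  ring

theorem normSq_im (a : ℍ[R]) : normSq a.im = normSq a - a.re ^ 2 := by
  simp only [normSq_def', re_im, imI_im, imJ_im, imK_im]
  ring

/-- The Cayley–Dickson product on `ℍ[R] × ℍ[R]`; over `ℝ` it is the octonion product. -/
def cayleyDicksonMul (x y : ℍ[R] × ℍ[R]) : ℍ[R] × ℍ[R] :=
  (x.1 * y.1 - star y.2 * x.2, y.2 * x.1 + x.2 * star y.1)

theorem normSq_cayleyDicksonMul (x y : ℍ[R] × ℍ[R]) :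
    normSq (cayleyDicksonMul x y).1 + normSq (cayleyDicksonMul x y).2 =
      (normSq x.1 + normSq x.2) * (normSq y.1 + normSq y.2) := by
  obtain ⟨a, b⟩ := x
  obtain ⟨c, d⟩ := y
  have cross_terms : (a * c * star (star d * b)).re = (d * a * star (b * star c)).re := by
    rw [star_mul, star_mul, star_star, star_star, ← mul_assoc, re_mul_comm]
    simp only [mul_assoc]
  simp only [cayleyDicksonMul, normSq_sub, normSq_add, map_mul, normSq_star, cross_terms]
  ring

end Quaternion

open Quaternion

theorem oinner_self (x : ℍ[ℝ] × ℍ[ℝ]) : oinner x x = normSq x.1 + normSq x.2 := rfl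

theorem sq_onorm (x : ℍ[ℝ] × ℍ[ℝ]) : onorm x ^ 2 = oinner x x :=
  Real.sq_sqrt (by rw [oinner_self]; exact add_nonneg normSq_nonneg normSq_nonneg)

theorem ocross_eq (x y : ℍ[ℝ] × ℍ[ℝ]) :
    ocross x y = ((cayleyDicksonMul x y).1.im, (cayleyDicksonMul x y).2) := rfl

theorem re_cayleyDicksonMul_fst {x : ℍ[ℝ] × ℍ[ℝ]} (hx : x.1.re = 0) (y : ℍ[ℝ] × ℍ[ℝ]) :
    (cayleyDicksonMul x y).1.re = -oinner x y := by
  have re_mul_star : (x.1 * star y.1).re = -(x.1 * y.1).re := by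
    simp only [re_mul, re_star, imI_star, imJ_star, imK_star, hx]
    ring
  rw [oinner, re_mul_star, re_mul_comm x.2, cayleyDicksonMul, re_sub]
  ring

theorem ocross_norm_sq_general
    (u v : Quaternion ℝ × Quaternion ℝ) (hu : u.1.re = 0) :
    onorm (ocross u v) ^ 2 = onorm u ^ 2 * onorm v ^ 2 - oinner u v ^ 2 := by
  simp only [sq_onorm, oinner_self, ocross_eq, normSq_im, ← normSq_cayleyDicksonMul,
    re_cayleyDicksonMul_fst hu]
  ring

/-- `‖u × v‖² = ‖u‖² ‖v‖² − ⟨u, v⟩²`, i.e. the length of `u × v`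
equals the area of the parallelogram spanned by `u` and `v`. -/
theorem ocross_norm_sq
    (u v : Quaternion ℝ × Quaternion ℝ) (hu : u.1.re = 0) (hv : v.1.re = 0) :
    onorm (ocross u v) ^ 2 = onorm u ^ 2 * onorm v ^ 2 - oinner u v ^ 2 :=
  ocross_norm_sq_general u v hu
end
end

section
/- The 4-linear form on ℝ⁷ ≅ Im ℍ × ℍ given by (u,v,w,z) ↦ ⟨τ(u,v,w), z⟩, where τ(u,v,w) = −u × (v × w) − ⟨u,v⟩ w + ⟨u,w⟩ v, is alternating: it vanishes whenever two of its four arguments are equal. In particular τ itself is an alternating vector-valued 3-form (this 4-form is (∗Ω)(u,v,w,z) = ⟨τ(u,v,w), z⟩). -/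
noncomputable section

/-- The vector-valued 3-form `τ(u,v,w) = −u × (v × w) − ⟨u,v⟩ w + ⟨u,w⟩ v`. -/
def tau (u v w : Quaternion ℝ × Quaternion ℝ) : Quaternion ℝ × Quaternion ℝ :=
  - ocross u (ocross v w) - oinner u v • w + oinner u w • v

/-- The 4-linear form `(∗Ω)(u,v,w,z) = ⟨τ(u,v,w), z⟩`. -/
def coassocForm (u v w z : Quaternion ℝ × Quaternion ℝ) : ℝ :=
  oinner (tau u v w) z

/-! On imaginary octonions the cross product is anticommutative, left multiplication `x × ·` is
skew-adjoint, and `x × (x × y) = ⟨x, y⟩ x - |x|² y`; each of these is a finite check in quaternion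
coordinates. Substituting them into `τ` shows that `τ(u, u, w)`, `τ(u, v, u)` and `τ(u, v, v)`
vanish, and for `z ∈ {u, v, w}` the term `⟨u × (v × w), z⟩ = -⟨v × w, u × z⟩` cancels the two
inner-product terms of `⟨τ(u, v, w), z⟩` by `⟨x × y, x × z⟩ = |x|² ⟨y, z⟩ - ⟨x, y⟩ ⟨x, z⟩`. -/

open Quaternion

section Bilinear

variable (x y z : ℍ[ℝ] × ℍ[ℝ]) (c : ℝ)

theorem oinner_eq_inner : oinner x y = inner ℝ x.1 y.1 + inner ℝ x.2 y.2 := by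
  simp only [oinner, inner_def]

theorem oinner_comm : oinner x y = oinner y x := by
  simp only [oinner_eq_inner, real_inner_comm x.1, real_inner_comm x.2]

@[simp] theorem oinner_zero_left : oinner 0 x = 0 := by
  simp only [oinner_eq_inner, Prod.fst_zero, Prod.snd_zero, inner_zero_left, add_zero]

@[simp] theorem oinner_neg_left : oinner (-x) y = -oinner x y := by
  simp only [oinner_eq_inner, Prod.fst_neg, Prod.snd_neg, inner_neg_left, neg_add]

@[simp] theorem oinner_neg_right : oinner x (-y) = -oinner x y := by
  simp only [oinner_eq_inner, Prod.fst_neg, Prod.snd_neg, inner_neg_right, neg_add]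

@[simp] theorem oinner_add_left : oinner (x + y) z = oinner x z + oinner y z := by
  simp only [oinner_eq_inner, Prod.fst_add, Prod.snd_add, inner_add_left]
  ring

@[simp] theorem oinner_sub_left : oinner (x - y) z = oinner x z - oinner y z := by
  simp only [oinner_eq_inner, Prod.fst_sub, Prod.snd_sub, inner_sub_left]
  ring

@[simp] theorem oinner_sub_right : oinner x (y - z) = oinner x y - oinner x z := by
  simp only [oinner_eq_inner, Prod.fst_sub, Prod.snd_sub, inner_sub_right]
  ring

@[simp] theorem oinner_smul_left : oinner (c • x) y = c * oinner x y := by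
  simp only [oinner_eq_inner, Prod.smul_fst, Prod.smul_snd, real_inner_smul_left, mul_add]

@[simp] theorem oinner_smul_right : oinner x (c • y) = c * oinner x y := by
  simp only [oinner_eq_inner, Prod.smul_fst, Prod.smul_snd, real_inner_smul_right, mul_add]

@[simp] theorem ocross_zero_right : ocross x 0 = 0 := by
  simp only [ocross, Prod.fst_zero, Prod.snd_zero, mul_zero, star_zero, zero_mul, sub_self, im_zero,
    add_zero, Prod.mk_zero_zero]

@[simp] theorem ocross_neg_right : ocross x (-y) = -ocross x y := by
  simp only [ocross, Prod.fst_neg, Prod.snd_neg, mul_neg, neg_mul, star_neg, neg_add, Prod.neg_mk,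
    ← neg_sub', im_neg]

theorem ocross_fst_re : (ocross x y).1.re = 0 := re_im _

end Bilinear

section CrossProduct

variable {x y z : ℍ[ℝ] × ℍ[ℝ]}

theorem ocross_anticomm (hx : x.1.re = 0) (hy : y.1.re = 0) : ocross y x = -ocross x y := by
  ext <;> simp [ocross, hx, hy] <;> ring

theorem ocross_self (hx : x.1.re = 0) : ocross x x = 0 := by
  ext <;> simp [ocross, hx] <;> ring

theorem oinner_ocross_left (hx : x.1.re = 0) (hy : y.1.re = 0) (hz : z.1.re = 0) :
    oinner (ocross x y) z = -oinner y (ocross x z) := by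
  simp [oinner, ocross, hx, hy, hz]; ring

theorem ocross_ocross_self_s3 (hx : x.1.re = 0) (hy : y.1.re = 0) :
    ocross x (ocross x y) = oinner x y • x - oinner x x • y := by
  ext <;> simp [oinner, ocross, hx, hy] <;> ring

theorem oinner_ocross_self_right (hx : x.1.re = 0) (hy : y.1.re = 0) :
    oinner (ocross x y) x = 0 := by
  rw [oinner_ocross_left hx hy hx, ocross_self hx, oinner_comm, oinner_zero_left, neg_zero]

theorem oinner_ocross_ocross_self (hx : x.1.re = 0) (hy : y.1.re = 0) (hz : z.1.re = 0) :
    oinner (ocross x y) (ocross x z) = oinner x x * oinner y z - oinner x y * oinner x z := by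
  rw [oinner_ocross_left hx hy (ocross_fst_re x z), ocross_ocross_self_s3 hx hz]
  simp only [oinner_sub_right, oinner_smul_right, oinner_comm y x]
  ring

end CrossProduct

section Alternating

variable {u v w : ℍ[ℝ] × ℍ[ℝ]}

theorem tau_self_first_second (hu : u.1.re = 0) (hw : w.1.re = 0) : tau u u w = 0 := by
  rw [tau, ocross_ocross_self_s3 hu hw]
  abel

theorem tau_self_first_third (hu : u.1.re = 0) (hv : v.1.re = 0) : tau u v u = 0 := by
  rw [tau, ocross_anticomm hu hv, ocross_neg_right, ocross_ocross_self_s3 hu hv]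
  abel

theorem tau_self_second_third (hv : v.1.re = 0) : tau u v v = 0 := by
  rw [tau, ocross_self hv, ocross_zero_right]
  abel

theorem coassocForm_eq (u v w z : ℍ[ℝ] × ℍ[ℝ]) :
    coassocForm u v w z =
      -oinner (ocross u (ocross v w)) z - oinner u v * oinner w z + oinner u w * oinner v z := by
  simp only [coassocForm, tau, oinner_add_left, oinner_sub_left, oinner_neg_left, oinner_smul_left]

theorem coassocForm_self_first_fourth (hu : u.1.re = 0) (v w : ℍ[ℝ] × ℍ[ℝ]) :
    coassocForm u v w u = 0 := by
  rw [coassocForm_eq, oinner_ocross_self_right hu (ocross_fst_re v w), oinner_comm w u,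
    oinner_comm v u]
  ring

theorem coassocForm_self_second_fourth (hu : u.1.re = 0) (hv : v.1.re = 0) (hw : w.1.re = 0) :
    coassocForm u v w v = 0 := by
  rw [coassocForm_eq, oinner_ocross_left hu (ocross_fst_re v w) hv, ocross_anticomm hv hu,
    oinner_neg_right, oinner_ocross_ocross_self hv hw hu, oinner_comm w v, oinner_comm w u,
    oinner_comm v u]
  ring

theorem coassocForm_self_third_fourth (hu : u.1.re = 0) (hv : v.1.re = 0) (hw : w.1.re = 0) :
    coassocForm u v w w = 0 := by
  rw [coassocForm_eq, oinner_ocross_left hu (ocross_fst_re v w) hw, ocross_anticomm hw hv,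
    ocross_anticomm hw hu, oinner_neg_left, oinner_neg_right, oinner_ocross_ocross_self hw hv hu,
    oinner_comm w v, oinner_comm w u, oinner_comm v u]
  ring

end Alternating

theorem coassocForm_alternating_general
    (u v w z : Quaternion ℝ × Quaternion ℝ)
    (hu : u.1.re = 0) (hv : v.1.re = 0) (hw : w.1.re = 0) :
    coassocForm u u w z = 0 ∧
    coassocForm u v u z = 0 ∧
    coassocForm u v w u = 0 ∧
    coassocForm u v v z = 0 ∧
    coassocForm u v w v = 0 ∧
    coassocForm u v w w = 0 := by
  refine ⟨?_, ?_, coassocForm_self_first_fourth hu v w, ?_,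
    coassocForm_self_second_fourth hu hv hw, coassocForm_self_third_fourth hu hv hw⟩
  · rw [coassocForm, tau_self_first_second hu hw, oinner_zero_left]
  · rw [coassocForm, tau_self_first_third hu hv, oinner_zero_left]
  · rw [coassocForm, tau_self_second_third hv, oinner_zero_left]

/-- the 4-linear form `(u,v,w,z) ↦ ⟨τ(u,v,w), z⟩` on
`ℝ⁷ ≅ Im ℍ × ℍ` is alternating: it vanishes whenever two of its four
arguments are equal. -/
theorem coassocForm_alternating
    (u v w z : Quaternion ℝ × Quaternion ℝ)
    (hu : u.1.re = 0) (hv : v.1.re = 0) (hw : w.1.re = 0) (hz : z.1.re = 0) :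
    coassocForm u u w z = 0 ∧
    coassocForm u v u z = 0 ∧
    coassocForm u v w u = 0 ∧
    coassocForm u v v z = 0 ∧
    coassocForm u v w v = 0 ∧
    coassocForm u v w w = 0 :=
  coassocForm_alternating_general u v w z hu hv hw
end
end

section
/- For all u, w ∈ ℝ⁷ ≅ Im ℍ × ℍ one has u × (u × w) = −‖u‖² w + ⟨u,w⟩ u for the octonionic cross product. In particular, if ‖u‖ = 1 and ⟨u,w⟩ = 0 then u × (u × w) = −w. -/
/-!
With `u = (a, b)` and `w = (c, d)`, `a` and `c` imaginary, the identity is a computation in `ℍ`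
driven by `a² = -|a|²`, `a c + c a = -2⟨a, c⟩` and `b d* b = 2⟨b, d⟩ b - |b|² d`; for instance the
first component of `u × (u × w)` collapses to `-(|a|² + |b|²) c + (⟨a, c⟩ + ⟨b, d⟩) a` because the
two terms `± a d* b` cancel.
-/

noncomputable section

theorem oinner_self_nonneg (x : Quaternion ℝ × Quaternion ℝ) : 0 ≤ oinner x x := by
  simp only [oinner, Quaternion.self_mul_star, Quaternion.re_coe]
  exact add_nonneg Quaternion.normSq_nonneg Quaternion.normSq_nonneg

theorem onorm_sq (x : Quaternion ℝ × Quaternion ℝ) : onorm x ^ 2 = oinner x x :=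
  Real.sq_sqrt (oinner_self_nonneg x)

theorem ocross_ocross_self_eq {u w : Quaternion ℝ × Quaternion ℝ} (hu : u.1.re = 0)
    (hw : w.1.re = 0) : ocross u (ocross u w) = (-oinner u u) • w + oinner u w • u := by
  ext <;>
    simp only [ocross, oinner, Prod.fst_add, Prod.snd_add, Prod.smul_fst, Prod.smul_snd,
      Quaternion.re_add, Quaternion.imI_add, Quaternion.imJ_add, Quaternion.imK_add,
      Quaternion.re_smul, Quaternion.imI_smul, Quaternion.imJ_smul, Quaternion.imK_smul,
      Quaternion.re_mul, Quaternion.imI_mul, Quaternion.imJ_mul, Quaternion.imK_mul,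
      Quaternion.imI_sub, Quaternion.imJ_sub, Quaternion.imK_sub,
      Quaternion.re_star, Quaternion.imI_star, Quaternion.imJ_star, Quaternion.imK_star,
      Quaternion.re_im, Quaternion.imI_im, Quaternion.imJ_im, Quaternion.imK_im,
      smul_eq_mul, hu, hw] <;>
    ring

/-- `u × (u × w) = −‖u‖² w + ⟨u,w⟩ u`; in particular, if `‖u‖ = 1`
and `⟨u,w⟩ = 0` then `u × (u × w) = −w`. -/
theorem ocross_ocross_self
    (u w : Quaternion ℝ × Quaternion ℝ) (hu : u.1.re = 0) (hw : w.1.re = 0) :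
    ocross u (ocross u w) = (-(onorm u ^ 2)) • w + oinner u w • u ∧
    (onorm u = 1 → oinner u w = 0 → ocross u (ocross u w) = -w) := by
  have key := ocross_ocross_self_eq hu hw
  refine ⟨by rwa [onorm_sq], fun hunit horth => ?_⟩
  rw [key, horth, ← onorm_sq, hunit]
  simp
end
end

section
/- (Quantitative implicit function theorem.) Let X and Y be real Banach spaces, r > 0, and let F : X → Y be continuously Fréchet differentiable on the open ball B_r(0) ⊂ X, with derivative DF(x) ∈ L(X, Y) at each x ∈ B_r(0). Assume: (1) DF(0) is invertible with bounded inverse G = (DF(0))⁻¹, and there are constants A, B ≥ 0 with ‖G(F(0))‖ ≤ A and ‖G‖ ≤ B; (2) there is κ ≥ 0 with ‖DF(x) − DF(0)‖ ≤ κ‖x‖ for all x ∈ B_r(0); (3) 2κAB < 1 and 2A < r. Then F has exactly one zero x with ‖x‖ ≤ 2A. -/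
/-!
Zeros of `F` are the fixed points of the simplified Newton map `T x = x - G (F x)`. On the
closed ball of radius `2A`, the mean value inequality for `F - DF(0)` makes `T` a contraction
with constant `2κA‖G‖`, and integrating the linear bound on `DF` along `[0, x]` gives
`‖F x - F 0 - DF(0) x‖ ≤ κ‖x‖²/2`, hence `‖T x‖ ≤ A + 2κA‖G‖ · A ≤ 2A`. The Banach fixed point
theorem then gives exactly one fixed point in that ball.
-/

open Function Metric Set

theorem existsUnique_isFixedPt_of_dist_le_mul {α : Type*} [MetricSpace α] {T : α → α}
    {s : Set α} {K : ℝ} (hs : IsComplete s) (hne : s.Nonempty) (hmaps : MapsTo T s s)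
    (hK : K < 1) (hT : ∀ x ∈ s, ∀ y ∈ s, dist (T x) (T y) ≤ K * dist x y) :
    ∃! x, x ∈ s ∧ IsFixedPt T x := by
  obtain ⟨x₀, hx₀⟩ := hne
  have hcontr : ContractingWith K.toNNReal (hmaps.restrict T s s) := by
    refine ⟨Real.toNNReal_lt_one.2 hK, LipschitzWith.of_dist_le_mul fun x y => ?_⟩
    exact (hT x x.2 y y.2).trans (mul_le_mul_of_nonneg_right (Real.le_coe_toNNReal K) dist_nonneg)
  obtain ⟨x, hx, hfix, -⟩ := hcontr.exists_fixedPoint' hs hmaps hx₀ (edist_ne_top _ _)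
  refine ⟨x, ⟨hx, hfix⟩, fun y ⟨hy, hyfix⟩ => ?_⟩
  have hdist := hT y hy x hx
  rw [hyfix.eq, hfix.eq] at hdist
  exact dist_le_zero.1 (by nlinarith [dist_nonneg (x := y) (y := x)])

section

variable {X Y : Type*} [NormedAddCommGroup X] [NormedSpace ℝ X]
  [NormedAddCommGroup Y] [NormedSpace ℝ Y]

theorem norm_sub_sub_fderiv_le_of_norm_fderiv_sub_le {r κ : ℝ} {F : X → Y}
    {F' : X → X →L[ℝ] Y} (hdiff : ∀ x ∈ ball (0 : X) r, HasFDerivAt F (F' x) x)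
    (hlip : ∀ x ∈ ball (0 : X) r, ‖F' x - F' 0‖ ≤ κ * ‖x‖) {x : X} (hx : x ∈ ball (0 : X) r) :
    ‖F x - F 0 - F' 0 x‖ ≤ κ / 2 * ‖x‖ ^ 2 := by
  have hseg : ∀ t ∈ Icc (0 : ℝ) 1, t • x ∈ ball (0 : X) r := fun t ht =>
    ((convex_ball (0 : X) r).starConvex (mem_ball_self (pos_of_mem_ball hx))).smul_mem hx ht.1 ht.2
  set φ : ℝ → Y := fun t => F (t • x) - F 0 - t • F' 0 x
  have hφ : ∀ t ∈ Icc (0 : ℝ) 1, HasDerivAt φ (F' (t • x) x - F' 0 x) t := by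
    intro t ht
    have hline : HasDerivAt (fun s : ℝ => s • x) x t := by
      simpa using (hasDerivAt_id t).smul_const x
    exact (((hdiff _ (hseg t ht)).comp_hasDerivAt t hline).sub_const (F 0)).sub
      (by simpa using (hasDerivAt_id t).smul_const (F' 0 x))
  have hbound : ∀ t ∈ Ico (0 : ℝ) 1, ‖F' (t • x) x - F' 0 x‖ ≤ κ * ‖x‖ ^ 2 * t := by
    intro t ht
    calc ‖F' (t • x) x - F' 0 x‖ = ‖(F' (t • x) - F' 0) x‖ := rfl
      _ ≤ ‖F' (t • x) - F' 0‖ * ‖x‖ := (F' (t • x) - F' 0).le_opNorm x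
      _ ≤ κ * ‖t • x‖ * ‖x‖ := by gcongr; exact hlip _ (hseg t (Ico_subset_Icc_self ht))
      _ = κ * ‖x‖ ^ 2 * t := by rw [norm_smul, Real.norm_of_nonneg ht.1]; ring
  have hquad : ∀ t, HasDerivAt (fun s : ℝ => κ / 2 * ‖x‖ ^ 2 * s ^ 2) (κ * ‖x‖ ^ 2 * t) t :=
    fun t => ((hasDerivAt_pow 2 t).const_mul (κ / 2 * ‖x‖ ^ 2)).congr_deriv (by ring)
  have := image_norm_le_of_norm_deriv_right_le_deriv_boundary
    (fun t ht => (hφ t ht).continuousAt.continuousWithinAt)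
    (fun t ht => (hφ t (Ico_subset_Icc_self ht)).hasDerivWithinAt) (by simp [φ]) hquad hbound
    (right_mem_Icc.2 zero_le_one)
  simpa [φ] using this

def simplifiedNewtonMap (G : Y →L[ℝ] X) (F : X → Y) (x : X) : X := x - G (F x)

variable {G : Y →L[ℝ] X} {F : X → Y} {L : X →L[ℝ] Y}

theorem norm_simplifiedNewtonMap_sub_le (hGL : ∀ x, G (L x) = x) (x y : X) :
    ‖simplifiedNewtonMap G F x - simplifiedNewtonMap G F y‖ ≤ ‖G‖ * ‖F x - F y - L (x - y)‖ := by
  calc ‖simplifiedNewtonMap G F x - simplifiedNewtonMap G F y‖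
      = ‖G (-(F x - F y - L (x - y)))‖ := by
        simp only [simplifiedNewtonMap, map_neg, map_sub, hGL]; abel_nf
    _ ≤ ‖G‖ * ‖F x - F y - L (x - y)‖ := (G.le_opNorm _).trans_eq (by rw [norm_neg])

theorem isFixedPt_simplifiedNewtonMap_iff (hLG : ∀ y, L (G y) = y) {x : X} :
    IsFixedPt (simplifiedNewtonMap G F) x ↔ F x = 0 := by
  have hG : Injective G := LeftInverse.injective (g := L) hLG
  simp only [IsFixedPt, simplifiedNewtonMap, sub_eq_self, map_eq_zero_iff G hG]

theorem dist_simplifiedNewtonMap_le_of_mem_closedBall {F' : X → X →L[ℝ] Y} {ρ κ : ℝ}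
    (hκ : 0 ≤ κ) (hGL : ∀ x, G (F' 0 x) = x)
    (hdiff : ∀ x ∈ closedBall (0 : X) ρ, HasFDerivAt F (F' x) x)
    (hlip : ∀ x ∈ closedBall (0 : X) ρ, ‖F' x - F' 0‖ ≤ κ * ‖x‖) {x y : X}
    (hx : x ∈ closedBall (0 : X) ρ) (hy : y ∈ closedBall (0 : X) ρ) :
    dist (simplifiedNewtonMap G F x) (simplifiedNewtonMap G F y) ≤ ‖G‖ * (κ * ρ) * dist x y := by
  have hbound : ∀ z ∈ closedBall (0 : X) ρ, ‖F' z - F' 0‖ ≤ κ * ρ := fun z hz =>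
    (hlip z hz).trans (mul_le_mul_of_nonneg_left (mem_closedBall_zero_iff.1 hz) hκ)
  have hmv := (convex_closedBall (0 : X) ρ).norm_image_sub_le_of_norm_hasFDerivWithin_le'
    (fun z hz => (hdiff z hz).hasFDerivWithinAt) hbound hy hx
  rw [dist_eq_norm, dist_eq_norm, mul_assoc]
  exact (norm_simplifiedNewtonMap_sub_le hGL x y).trans (by gcongr)

theorem mapsTo_simplifiedNewtonMap_closedBall {F' : X → X →L[ℝ] Y} {r A κ : ℝ} (hκ : 0 ≤ κ)
    (hGL : ∀ x, G (F' 0 x) = x) (hdiff : ∀ x ∈ ball (0 : X) r, HasFDerivAt F (F' x) x)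
    (hlip : ∀ x ∈ ball (0 : X) r, ‖F' x - F' 0‖ ≤ κ * ‖x‖) (hGF0 : ‖G (F 0)‖ ≤ A)
    (hsmall : 2 * κ * A * ‖G‖ ≤ 1) (hrad : 2 * A < r) :
    MapsTo (simplifiedNewtonMap G F) (closedBall 0 (2 * A)) (closedBall 0 (2 * A)) := by
  intro x hx
  rw [mem_closedBall_zero_iff] at hx ⊢
  have hA : 0 ≤ A := (norm_nonneg _).trans hGF0
  have htaylor := norm_sub_sub_fderiv_le_of_norm_fderiv_sub_le hdiff hlip
    (mem_ball_zero_iff.2 (hx.trans_lt hrad))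
  calc ‖simplifiedNewtonMap G F x‖
      ≤ ‖simplifiedNewtonMap G F 0‖ + ‖simplifiedNewtonMap G F x - simplifiedNewtonMap G F 0‖ :=
        norm_le_norm_add_norm_sub' _ _
    _ ≤ A + ‖G‖ * (κ / 2 * ‖x‖ ^ 2) := by
        gcongr
        · simpa [simplifiedNewtonMap] using hGF0
        · exact (norm_simplifiedNewtonMap_sub_le hGL x 0).trans (by rw [sub_zero]; gcongr)
    _ ≤ A + ‖G‖ * (κ / 2 * (2 * A) ^ 2) := by gcongr
    _ = A + 2 * κ * A * ‖G‖ * A := by ring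
    _ ≤ 2 * A := by nlinarith

end

theorem quantitative_implicit_function_theorem_general
    {X Y : Type*}
    [NormedAddCommGroup X] [NormedSpace ℝ X] [CompleteSpace X]
    [NormedAddCommGroup Y] [NormedSpace ℝ Y]
    (r A B κ : ℝ) (hA : 0 ≤ A) (hκ : 0 ≤ κ)
    (F : X → Y) (F' : X → X →L[ℝ] Y)
    (hdiff : ∀ x ∈ Metric.ball (0 : X) r, HasFDerivAt F (F' x) x)
    (G : Y →L[ℝ] X)
    (hGleft : ∀ x : X, G ((F' 0) x) = x)
    (hGright : ∀ y : Y, (F' 0) (G y) = y)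
    (hGF0 : ‖G (F 0)‖ ≤ A)
    (hGnorm : ‖G‖ ≤ B)
    (hlip : ∀ x ∈ Metric.ball (0 : X) r, ‖F' x - F' 0‖ ≤ κ * ‖x‖)
    (hsmall : 2 * κ * A * B < 1)
    (hrad : 2 * A < r) :
    ∃! x : X, ‖x‖ ≤ 2 * A ∧ F x = 0 := by
  have hGsmall : 2 * κ * A * ‖G‖ < 1 := lt_of_le_of_lt (by gcongr) hsmall
  have hball : closedBall (0 : X) (2 * A) ⊆ ball 0 r := closedBall_subset_ball hrad
  have hcontr : ∀ x ∈ closedBall (0 : X) (2 * A), ∀ y ∈ closedBall (0 : X) (2 * A),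
      dist (simplifiedNewtonMap G F x) (simplifiedNewtonMap G F y)
        ≤ 2 * κ * A * ‖G‖ * dist x y := fun x hx y hy =>
    (dist_simplifiedNewtonMap_le_of_mem_closedBall hκ hGleft (fun z hz => hdiff z (hball hz))
      (fun z hz => hlip z (hball hz)) hx hy).trans_eq (by ring)
  have hfixed := existsUnique_isFixedPt_of_dist_le_mul isClosed_closedBall.isComplete
    (nonempty_closedBall.2 (by positivity))
    (mapsTo_simplifiedNewtonMap_closedBall hκ hGleft hdiff hlip hGF0 hGsmall.le hrad) hGsmall hcontr
  simpa only [mem_closedBall_zero_iff, isFixedPt_simplifiedNewtonMap_iff hGright] using hfixed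

/-- quantitative implicit function theorem. If `F` is `C¹` on
`B_r(0)` with `DF(0)` invertible (inverse `G`), `‖G(F(0))‖ ≤ A`, `‖G‖ ≤ B`,
`‖DF(x) − DF(0)‖ ≤ κ‖x‖` on `B_r(0)`, `2κAB < 1` and `2A < r`, then `F` has
exactly one zero `x` with `‖x‖ ≤ 2A`. -/
theorem quantitative_implicit_function_theorem
    {X Y : Type*}
    [NormedAddCommGroup X] [NormedSpace ℝ X] [CompleteSpace X]
    [NormedAddCommGroup Y] [NormedSpace ℝ Y] [CompleteSpace Y]
    (r A B κ : ℝ) (hr : 0 < r) (hA : 0 ≤ A) (hB : 0 ≤ B) (hκ : 0 ≤ κ)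
    (F : X → Y) (F' : X → X →L[ℝ] Y)
    (hdiff : ∀ x ∈ Metric.ball (0 : X) r, HasFDerivAt F (F' x) x)
    (hcont : ContinuousOn F' (Metric.ball (0 : X) r))
    (G : Y →L[ℝ] X)
    (hGleft : ∀ x : X, G ((F' 0) x) = x)
    (hGright : ∀ y : Y, (F' 0) (G y) = y)
    (hGF0 : ‖G (F 0)‖ ≤ A)
    (hGnorm : ‖G‖ ≤ B)
    (hlip : ∀ x ∈ Metric.ball (0 : X) r, ‖F' x - F' 0‖ ≤ κ * ‖x‖)
    (hsmall : 2 * κ * A * B < 1)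
    (hrad : 2 * A < r) :
    ∃! x : X, ‖x‖ ≤ 2 * A ∧ F x = 0 :=
  quantitative_implicit_function_theorem_general r A B κ hA hκ F F' hdiff G hGleft hGright hGF0
    hGnorm hlip hsmall hrad
end
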